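/- Let x, y be fixed real numbers and i, j nonnegative integers. Then n^{-(1+i+j)} ∑_{r=0}^{n} (r)_i (r)_j (-1)^r (1 + x/n)^r (1 + y/n)^r → 0 as n → ∞. -/

import Mathlib

open Filter Real

/-!
Write the summand as `(-1)^r a_r` with `a_r = (r)_i (r)_j q^r` and `q = (1 + x/n)(1 + y/n)`.
An alternating sum is bounded by its first term plus the total variation of `(a_r)`.
For `r ≤ n` we have `|q^r| ≤ exp(|x| + |y|)` and `(r)_i (r)_j ≤ n^(i+j)`; the polynomial factor
is monotone, so its variation is at most `n^(i+j)`, and `|q - 1| = O(1/n)`, so the variation of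
`q^r` over `n` steps is `O(1)`. Hence the sum is `O(n^(i+j))`, one power of `n` less than the
normalisation.
-/

open Finset

noncomputable def discreteVariation {E : Type*} [SeminormedAddCommGroup E] (a : ℕ → E) (m : ℕ) :
    ℝ :=
  ∑ r ∈ range m, ‖a (r + 1) - a r‖

section DiscreteVariation

variable {E : Type*} [SeminormedAddCommGroup E]

theorem norm_sub_le_discreteVariation (a : ℕ → E) (m : ℕ) :
    ‖a m - a 0‖ ≤ discreteVariation a m := by
  rw [← sum_range_sub]
  exact norm_sum_le _ _

/-- Passing from `m` to `m + 1` changes the left-hand side by `±(a m - a (m + 1))`. -/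
theorem norm_two_smul_alternating_sum_sub_le [NormedSpace ℝ E] (a : ℕ → E) (m : ℕ) :
    ‖(2 : ℝ) • ∑ r ∈ range (m + 1), (-1 : ℝ) ^ r • a r - (-1 : ℝ) ^ m • a m‖ ≤
      ‖a 0‖ + discreteVariation a m := by
  induction m with
  | zero => simp [two_smul, discreteVariation]
  | succ m ih =>
    have hstep : (2 : ℝ) • ∑ r ∈ range (m + 2), (-1 : ℝ) ^ r • a r - (-1 : ℝ) ^ (m + 1) • a (m + 1)
        = ((2 : ℝ) • ∑ r ∈ range (m + 1), (-1 : ℝ) ^ r • a r - (-1 : ℝ) ^ m • a m)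
          + (-1 : ℝ) ^ m • (a m - a (m + 1)) := by
      rw [sum_range_succ _ (m + 1), pow_succ]
      module
    rw [hstep, discreteVariation, sum_range_succ (fun r ↦ ‖a (r + 1) - a r‖), ← add_assoc]
    refine (norm_add_le _ _).trans (add_le_add ih ?_)
    rw [norm_smul, norm_pow, norm_neg, norm_one, one_pow, one_mul, norm_sub_rev]

theorem norm_alternating_sum_le [NormedSpace ℝ E] (a : ℕ → E) (m : ℕ) :
    ‖∑ r ∈ range (m + 1), (-1 : ℝ) ^ r • a r‖ ≤ ‖a 0‖ + discreteVariation a m := by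
  have htwo := norm_two_smul_alternating_sum_sub_le a m
  have hlast : ‖a m‖ ≤ ‖a 0‖ + discreteVariation a m := by
    have := norm_sub_le_discreteVariation a m
    have := norm_le_norm_add_norm_sub' (a m) (a 0)
    linarith
  have := norm_le_norm_add_norm_sub' ((2 : ℝ) • ∑ r ∈ range (m + 1), (-1 : ℝ) ^ r • a r)
    ((-1 : ℝ) ^ m • a m)
  rw [norm_smul, norm_smul, norm_pow, norm_neg, norm_one, one_pow, one_mul, Real.norm_two] at this
  linarith

theorem Monotone.discreteVariation_eq {a : ℕ → ℝ} (ha : Monotone a) (m : ℕ) :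
    discreteVariation a m = a m - a 0 := by
  rw [discreteVariation, ← sum_range_sub]
  exact sum_congr rfl fun r _ ↦ by
    rw [Real.norm_eq_abs, abs_of_nonneg (sub_nonneg.2 (ha r.le_succ))]

end DiscreteVariation

section NormedRing

variable {R : Type*} [SeminormedRing R]

theorem discreteVariation_mul_le {u v : ℕ → R} {m : ℕ} {U W : ℝ}
    (hu : ∀ r ≤ m, ‖u r‖ ≤ U) (hv : ∀ r ≤ m, ‖v r‖ ≤ W) :
    discreteVariation (fun r ↦ u r * v r) m ≤
      W * discreteVariation u m + U * discreteVariation v m := by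
  simp only [discreteVariation, mul_sum, ← sum_add_distrib]
  refine sum_le_sum fun r hr ↦ ?_
  have hr : r < m := mem_range.1 hr
  have hU : 0 ≤ U := (norm_nonneg _).trans (hu 0 m.zero_le)
  have hW : 0 ≤ W := (norm_nonneg _).trans (hv 0 m.zero_le)
  calc ‖u (r + 1) * v (r + 1) - u r * v r‖
      = ‖(u (r + 1) - u r) * v (r + 1) + u r * (v (r + 1) - v r)‖ := by
        noncomm_ring
    _ ≤ ‖u (r + 1) - u r‖ * ‖v (r + 1)‖ + ‖u r‖ * ‖v (r + 1) - v r‖ :=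
        (norm_add_le _ _).trans (add_le_add (norm_mul_le _ _) (norm_mul_le _ _))
    _ ≤ ‖u (r + 1) - u r‖ * W + U * ‖v (r + 1) - v r‖ := by
        gcongr
        · exact hv _ hr
        · exact hu _ hr.le
    _ = W * ‖u (r + 1) - u r‖ + U * ‖v (r + 1) - v r‖ := by ring

theorem discreteVariation_pow_le {q : R} {m : ℕ} {W : ℝ} (hq : ∀ r < m, ‖q ^ r‖ ≤ W) :
    discreteVariation (q ^ ·) m ≤ m * (W * ‖q - 1‖) := by
  calc discreteVariation (q ^ ·) m ≤ ∑ r ∈ range m, W * ‖q - 1‖ :=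
        sum_le_sum fun r hr ↦ by
          show ‖q ^ (r + 1) - q ^ r‖ ≤ _
          rw [pow_succ, ← mul_sub_one]
          exact norm_mul_le_of_le (hq r (mem_range.1 hr)) le_rfl
    _ = m * (W * ‖q - 1‖) := by simp

end NormedRing

theorem abs_one_add_div_pow_le_exp (x : ℝ) {r n : ℕ} (hr : r ≤ n) :
    |1 + x / n| ^ r ≤ exp |x| := by
  have hbase : |1 + x / n| ≤ exp (|x| / n) := by
    calc |1 + x / n| ≤ 1 + |x| / n := by
          simpa [abs_div] using abs_add_le (1 : ℝ) (x / n)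
      _ ≤ exp (|x| / n) := by linarith [add_one_le_exp (|x| / n)]
  calc |1 + x / n| ^ r ≤ exp (|x| / n) ^ r := by gcongr
    _ = exp (r / n * |x|) := by rw [← exp_nat_mul]; ring_nf
    _ ≤ exp |x| := by
        gcongr
        exact mul_le_of_le_one_left (abs_nonneg x)
          (div_le_one_of_le₀ (by exact_mod_cast hr) n.cast_nonneg)

theorem natCast_mul_abs_one_add_div_mul_sub_one_le (x y : ℝ) (n : ℕ) :
    n * |(1 + x / n) * (1 + y / n) - 1| ≤ |x| + |y| + |x * y| := by
  rcases n.eq_zero_or_pos with rfl | hn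
  · simp only [Nat.cast_zero, zero_mul]
    positivity
  have hn : (1 : ℝ) ≤ n := by exact_mod_cast hn
  have hexpand : n * ((1 + x / n) * (1 + y / n) - 1) = x + y + x * y / n := by
    field_simp
    ring
  calc n * |(1 + x / n) * (1 + y / n) - 1| = |x + y + x * y / n| := by
        rw [← hexpand, abs_mul, Nat.abs_cast]
    _ ≤ |x| + |y| + |x * y / n| := abs_add_three _ _ _
    _ ≤ |x| + |y| + |x * y| := by
        rw [abs_div, Nat.abs_cast]
        gcongr
        exact div_le_self (abs_nonneg _) hn

theorem monotone_descFactorial_mul_descFactorial (i j : ℕ) :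
    Monotone fun r : ℕ ↦ (r.descFactorial i * r.descFactorial j : ℝ) :=
  fun _ _ h ↦ by dsimp only; gcongr

theorem descFactorial_mul_descFactorial_le_pow {r n : ℕ} (hr : r ≤ n) (i j : ℕ) :
    (r.descFactorial i * r.descFactorial j : ℝ) ≤ n ^ (i + j) := by
  have hle (k : ℕ) : (r.descFactorial k : ℝ) ≤ n ^ k := by
    exact_mod_cast (Nat.descFactorial_le_pow r k).trans (Nat.pow_le_pow_left hr k)
  rw [pow_add]
  exact mul_le_mul (hle i) (hle j) (by positivity) (by positivity)

theorem abs_alternating_descFactorial_sum_le (x y : ℝ) (i j n : ℕ) :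
    |∑ r ∈ range (n + 1), (r.descFactorial i : ℝ) * (r.descFactorial j : ℝ) * (-1) ^ r *
        (1 + x / n) ^ r * (1 + y / n) ^ r|
      ≤ exp (|x| + |y|) * (2 + |x| + |y| + |x * y|) * n ^ (i + j) := by
  set p : ℕ → ℝ := fun r ↦ r.descFactorial i * r.descFactorial j with hp
  set q : ℝ := (1 + x / n) * (1 + y / n) with hq
  set E : ℝ := exp (|x| + |y|)
  set a : ℕ → ℝ := fun r ↦ p r * q ^ r
  have hp_le : ∀ r ≤ n, ‖p r‖ ≤ n ^ (i + j) := fun r hr ↦ by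
    rw [Real.norm_of_nonneg (by positivity)]
    exact descFactorial_mul_descFactorial_le_pow hr i j
  have hq_le : ∀ r ≤ n, ‖q ^ r‖ ≤ E := fun r hr ↦ by
    rw [norm_pow, norm_mul, Real.norm_eq_abs, Real.norm_eq_abs, mul_pow]
    exact (mul_le_mul (abs_one_add_div_pow_le_exp x hr) (abs_one_add_div_pow_le_exp y hr)
      (by positivity) (exp_pos _).le).trans_eq (exp_add _ _).symm
  have hvar_p : discreteVariation p n ≤ n ^ (i + j) := by
    rw [(monotone_descFactorial_mul_descFactorial i j).discreteVariation_eq]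
    linarith [descFactorial_mul_descFactorial_le_pow (le_refl n) i j, show 0 ≤ p 0 by positivity]
  have hvar_q : discreteVariation (q ^ ·) n ≤ E * (|x| + |y| + |x * y|) := by
    refine (discreteVariation_pow_le fun r hr ↦ hq_le r hr.le).trans ?_
    rw [Real.norm_eq_abs, mul_left_comm]
    exact mul_le_mul_of_nonneg_left (natCast_mul_abs_one_add_div_mul_sub_one_le x y n)
      (exp_pos _).le
  have hsum : ∑ r ∈ range (n + 1), (r.descFactorial i : ℝ) * (r.descFactorial j : ℝ) * (-1) ^ r *
      (1 + x / n) ^ r * (1 + y / n) ^ r = ∑ r ∈ range (n + 1), (-1 : ℝ) ^ r • a r :=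
    sum_congr rfl fun r _ ↦ by simp only [a, hp, hq, smul_eq_mul, mul_pow]; ring
  rw [hsum, ← Real.norm_eq_abs]
  calc _ ≤ ‖a 0‖ + discreteVariation a n := norm_alternating_sum_le a n
    _ ≤ n ^ (i + j) * E + (E * n ^ (i + j) + n ^ (i + j) * (E * (|x| + |y| + |x * y|))) := by
        gcongr
        · exact norm_mul_le_of_le (hp_le 0 n.zero_le) (hq_le 0 n.zero_le)
        · exact (discreteVariation_mul_le hp_le hq_le).trans (by gcongr)
    _ = E * (2 + |x| + |y| + |x * y|) * n ^ (i + j) := by ring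

/-- the alternating-sign cross-covariance sum tends to `0`:
`n^{-(1+i+j)} ∑_{r=0}^n (r)_i (r)_j (-1)^r (1+x/n)^r (1+y/n)^r → 0`. -/
theorem cross_covariance_vanishes (x y : ℝ) (i j : ℕ) :
    Tendsto (fun n : ℕ =>
        (1 / (n : ℝ) ^ (1 + i + j)) *
          ∑ r ∈ Finset.range (n + 1),
            (r.descFactorial i : ℝ) * (r.descFactorial j : ℝ) * (-1) ^ r *
              (1 + x / n) ^ r * (1 + y / n) ^ r)
      atTop (nhds 0) := by
  set C := exp (|x| + |y|) * (2 + |x| + |y| + |x * y|)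
  refine squeeze_zero_norm' ?_ (tendsto_const_div_atTop_nhds_zero_nat C)
  filter_upwards [eventually_gt_atTop 0] with n hpos
  have hn : (n : ℝ) ≠ 0 := by positivity
  rw [norm_mul, Real.norm_eq_abs, Real.norm_eq_abs, abs_of_nonneg (by positivity)]
  calc 1 / (n : ℝ) ^ (1 + i + j) * |_| ≤ 1 / (n : ℝ) ^ (1 + i + j) * (C * n ^ (i + j)) := by
        gcongr
        exact abs_alternating_descFactorial_sum_le x y i j n
    _ = C / n := by
        rw [add_assoc, pow_add, pow_one]
        field_simp
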